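/- arXiv:2410.24044 — 6 statements merged into one kernel-verified Lean document; each statement's English description precedes it below -/
import Mathlib

section
/- If g is an invertible n×n matrix over a field and b is an invertible upper triangular n×n matrix, then Δ_{gb}(S) = Δ_g(S) for every k-uniform hypergraph S ⊆ binom([n], k). -/
open Finset
open scoped symmDiff

/-- The type of `k`-element subsets of `[n]`. -/
def KSet (n k : ℕ) := {s : Finset (Fin n) // s.card = k}

instance {n k : ℕ} : Fintype (KSet n k) := by unfold KSet; infer_instance
instance {n k : ℕ} : DecidableEq (KSet n k) := by unfold KSet; infer_instance

/-- Lexicographic strict order on finsets: `s <lex t` iff the minimum of the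
symmetric difference `s ∆ t` belongs to `s`. -/
def lexLt {n : ℕ} (s t : Finset (Fin n)) : Prop :=
  ∃ a, a ∈ s \ t ∧ ∀ b ∈ s ∆ t, a ≤ b

/-- The `k`-th compound matrix of `g`. -/
def compound {F : Type*} [Field F] {n : ℕ} (g : Matrix (Fin n) (Fin n) F) (k : ℕ) :
    Matrix (KSet n k) (KSet n k) F :=
  fun σ τ => (Matrix.of fun a b : Fin k =>
    g (σ.1.orderIsoOfFin σ.2 a) (τ.1.orderIsoOfFin τ.2 b)).det

/-- The column of the matrix `g^{∧S}` (rows of the `k`-th compound matrix of `g`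
indexed by the hypergraph `S`) corresponding to the `k`-set `σ`. -/
def shiftCol {F : Type*} [Field F] {n k : ℕ} (g : Matrix (Fin n) (Fin n) F)
    (S : Finset (KSet n k)) (σ : KSet n k) : {ρ // ρ ∈ S} → F :=
  fun ρ => compound g k ρ.1 σ

/-- The partial exterior shift `Δ_g(S)`: those `σ` whose column of `g^{∧S}` is
not in the span of the lexicographically earlier columns. -/
def Delta {F : Type*} [Field F] {n k : ℕ} (g : Matrix (Fin n) (Fin n) F)
    (S : Finset (KSet n k)) : Set (KSet n k) :=
  {σ | shiftCol g S σ ∉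
    Submodule.span F (shiftCol g S '' {ρ : KSet n k | lexLt ρ.1 σ.1})}

/-!
By Cauchy–Binet the `k`-th compound is multiplicative, so the columns of `(g b)^{∧S}` are linear
combinations of those of `g^{∧S}` with coefficients from `b^{∧k}`. For upper triangular `b` the
compound `b^{∧k}` is upper triangular for the lexicographic order, with nonzero diagonal: each new
column `σ` is a nonzero multiple of the old column `σ` plus lexicographically earlier old columns.
Hence the spans of earlier columns can only shrink and `Δ_g(S) ⊆ Δ_{gb}(S)`. Since `b⁻¹` is again
upper triangular, the reverse inclusion follows from `g = (g b) b⁻¹`.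
-/

section LexOrder
variable {n : ℕ}

/-- On the order dual of `Fin n`, `lexLt` becomes the reverse of Mathlib's colex order. -/
def lexKey (s : Finset (Fin n)) : Colex (Finset (Fin n)ᵒᵈ) :=
  toColex (s.map OrderDual.toDual.toEmbedding)

lemma lexLt_iff_lexKey_lt {s t : Finset (Fin n)} : lexLt s t ↔ lexKey t < lexKey s := by
  simp only [lexKey, Colex.toColex_lt_toColex_iff_exists_forall_lt, mem_map_equiv,
    OrderDual.exists, OrderDual.forall, OrderDual.toDual_symm_eq, OrderDual.ofDual_toDual,
    OrderDual.toDual_lt_toDual]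
  constructor
  · rintro ⟨a, has, hmin⟩
    rw [mem_sdiff] at has
    exact ⟨a, has.1, has.2, fun b hbt hbs =>
      (hmin b (mem_symmDiff.2 (.inr ⟨hbt, hbs⟩))).lt_of_ne (ne_of_mem_of_not_mem hbt has.2).symm⟩
  · rintro ⟨a, has, hat, hmin⟩
    have hne : (s \ t).Nonempty := ⟨a, mem_sdiff.2 ⟨has, hat⟩⟩
    refine ⟨(s \ t).min' hne, min'_mem _ hne, fun b hb => ?_⟩
    rcases mem_symmDiff.1 hb with hbs | ⟨hbt, hbs⟩
    · exact min'_le _ _ (mem_sdiff.2 hbs)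
    · exact (min'_le _ _ (mem_sdiff.2 ⟨has, hat⟩)).trans (hmin b hbt hbs).le

lemma lexLt_trans {s t u : Finset (Fin n)} (hst : lexLt s t) (htu : lexLt t u) : lexLt s u := by
  rw [lexLt_iff_lexKey_lt] at *
  exact htu.trans hst

lemma lexLt_or_lexLt_of_ne {s t : Finset (Fin n)} (h : s ≠ t) : lexLt s t ∨ lexLt t s := by
  simp only [lexLt_iff_lexKey_lt]
  refine (lt_or_gt_of_ne fun hkey => h ?_).symm
  simpa [lexKey] using hkey

end LexOrder

namespace KSet
variable {n k : ℕ}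

abbrev emb (σ : KSet n k) : Fin k ↪o Fin n := σ.1.orderEmbOfFin σ.2

lemma range_emb (σ : KSet n k) : Set.range σ.emb = σ.1 := range_orderEmbOfFin _ _

lemma filter_lt_emb (σ : KSet n k) (i : Fin k) :
    {x ∈ σ.1 | x < σ.emb i} = (Iio i).map σ.emb.toEmbedding := by
  ext x
  simp only [mem_filter, mem_map, mem_Iio, RelEmbedding.coe_toEmbedding]
  constructor
  · rintro ⟨hx, hlt⟩
    obtain ⟨j, rfl⟩ : x ∈ Set.range σ.emb := by rw [range_emb]; exact hx
    exact ⟨j, σ.emb.lt_iff_lt.1 hlt, rfl⟩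
  · rintro ⟨j, hj, rfl⟩
    exact ⟨orderEmbOfFin_mem _ _ _, σ.emb.lt_iff_lt.2 hj⟩

lemma card_filter_lt_emb (σ : KSet n k) (i : Fin k) : #{x ∈ σ.1 | x < σ.emb i} = i := by
  rw [filter_lt_emb, card_map, Fin.card_Iio]

lemma exists_emb_comp_perm {f : Fin k → Fin n} (hf : Function.Injective f) :
    ∃ (σ : KSet n k) (π : Equiv.Perm (Fin k)), f = σ.emb ∘ π := by
  let σ : KSet n k := ⟨univ.image f, by rw [card_image_of_injective _ hf, card_fin]⟩
  have hsorted : f ∘ Tuple.sort f = σ.emb :=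
    orderEmbOfFin_unique σ.2 (fun i => mem_image_of_mem f (mem_univ _))
      ((Tuple.monotone_sort f).strictMono_of_injective (hf.comp (Tuple.sort f).injective))
  refine ⟨σ, (Tuple.sort f)⁻¹, ?_⟩
  rw [← hsorted, Function.comp_assoc, ← Equiv.Perm.coe_mul, mul_inv_cancel, Equiv.Perm.coe_one,
    Function.comp_id]

lemma emb_comp_perm_injective :
    Function.Injective fun p : KSet n k × Equiv.Perm (Fin k) => p.1.emb ∘ p.2 := by
  rintro ⟨σ, π⟩ ⟨τ, ρ⟩ h
  have hστ : σ = τ := by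
    apply Subtype.ext
    rw [← Finset.coe_inj, ← range_emb, ← range_emb, ← EquivLike.range_comp σ.emb π,
      ← EquivLike.range_comp τ.emb ρ]
    exact congrArg Set.range h
  subst hστ
  exact Prod.ext rfl (Equiv.ext fun i => σ.emb.injective (congrFun h i))

lemma exists_index_of_lexLt {σ τ : KSet n k} (h : lexLt σ.1 τ.1) :
    ∃ m, ∀ q ≤ m, ∀ p, m ≤ p → σ.emb q < τ.emb p := by
  obtain ⟨a, has, hmin⟩ := h
  rw [mem_sdiff] at has
  obtain ⟨m, rfl⟩ : a ∈ Set.range σ.emb := by rw [range_emb]; exact has.1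
  have hagree : {x ∈ τ.1 | x < σ.emb m} = {x ∈ σ.1 | x < σ.emb m} := by
    ext x
    simp only [mem_filter, and_congr_left_iff]
    intro hx
    by_contra hne
    exact (hmin x (by rw [mem_symmDiff]; tauto)).not_gt hx
  refine ⟨m, fun q hq p hp => (σ.emb.monotone hq).trans_lt ?_⟩
  -- `τ` has exactly `m` elements below `σ.emb m`, so its `p`-th element cannot be one of them
  by_contra! hle
  have hlt : τ.emb p < σ.emb m := hle.lt_of_ne fun heq => has.2 (heq ▸ orderEmbOfFin_mem _ _ _)
  have hssub : {x ∈ τ.1 | x < τ.emb p} ⊂ {x ∈ τ.1 | x < σ.emb m} :=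
    (ssubset_iff_of_subset fun x hx => by
      rw [mem_filter] at hx ⊢; exact ⟨hx.1, hx.2.trans hlt⟩).2
      ⟨τ.emb p, mem_filter.2 ⟨orderEmbOfFin_mem _ _ _, hlt⟩, by simp⟩
  have := card_lt_card hssub
  rw [hagree, card_filter_lt_emb, card_filter_lt_emb] at this
  exact this.not_ge hp

end KSet

namespace Matrix
variable {R : Type*} [CommRing R] {n k : ℕ}

lemma det_mul_eq_sum_prod_mul_det_submatrix (A : Matrix (Fin k) (Fin n) R)
    (B : Matrix (Fin n) (Fin k) R) :
    (A * B).det = ∑ f : Fin k → Fin n, (∏ i, B (f i) i) * (A.submatrix id f).det := by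
  simp only [det_apply', mul_apply, prod_univ_sum, Finset.mul_sum, Fintype.piFinset_univ,
    submatrix_apply, id, prod_mul_distrib]
  rw [Finset.sum_comm]
  refine sum_congr rfl fun f _ => sum_congr rfl fun π _ => ?_
  ring

theorem det_mul_eq_sum_minors (A : Matrix (Fin k) (Fin n) R) (B : Matrix (Fin n) (Fin k) R) :
    (A * B).det = ∑ τ : KSet n k, (A.submatrix id τ.emb).det * (B.submatrix τ.emb id).det := by
  rw [det_mul_eq_sum_prod_mul_det_submatrix]
  have hnoninj : ∀ f : Fin k → Fin n, ¬ Function.Injective f → (A.submatrix id f).det = 0 := by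
    intro f hf
    simp only [Function.Injective, not_forall] at hf
    obtain ⟨i, j, hij, hne⟩ := hf
    exact det_zero_of_column_eq hne fun r => by simp [hij]
  rw [← Fintype.sum_of_injective _ KSet.emb_comp_perm_injective _ _ (fun f hf => ?_) fun _ => rfl,
    Fintype.sum_prod_type]
  · refine sum_congr rfl fun τ _ => ?_
    have hperm : ∀ π : Equiv.Perm (Fin k), (A.submatrix id (τ.emb ∘ π)).det
        = Equiv.Perm.sign π * (A.submatrix id τ.emb).det := fun π =>
      det_permute' π (A.submatrix id τ.emb)
    simp only [Function.comp_apply, hperm, det_apply' (B.submatrix τ.emb id), submatrix_apply,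
      id, Finset.mul_sum]
    refine sum_congr rfl fun π _ => ?_
    ring
  · rw [hnoninj f fun hinj => hf ?_, mul_zero]
    obtain ⟨τ, π, rfl⟩ := KSet.exists_emb_comp_perm hinj
    exact ⟨(τ, π), rfl⟩

lemma det_eq_zero_of_lowerLeft_eq_zero
    {M : Matrix (Fin k) (Fin k) R} (m : Fin k) (hM : ∀ p q, q ≤ m → m ≤ p → M p q = 0) :
    M.det = 0 := by
  rw [det_apply']
  refine sum_eq_zero fun π _ => ?_
  obtain ⟨q, hqm, hmq⟩ : ∃ q ≤ m, m ≤ π q := by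
    -- pigeonhole: `π` cannot map the `m + 1` indices `≤ m` into the `m` indices `< m`
    by_contra! h
    obtain ⟨x, -, y, -, hxy, hπ⟩ := exists_ne_map_eq_of_card_lt_of_maps_to
      (s := Iic m) (t := Iio m) (by simp) fun q hq => mem_Iio.2 (h q (mem_Iic.1 hq))
    exact hxy (π.injective hπ)
  rw [prod_eq_zero (f := fun i => M (π i) i) (mem_univ q) (hM _ _ hqm hmq), mul_zero]

end Matrix

section Compound
variable {F : Type*} [Field F] {n k : ℕ}

lemma compound_apply (g : Matrix (Fin n) (Fin n) F) (ρ σ : KSet n k) :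
    compound g k ρ σ = (g.submatrix ρ.emb σ.emb).det := rfl

lemma compound_mul (g b : Matrix (Fin n) (Fin n) F) :
    compound (g * b) k = compound g k * compound b k := by
  ext ρ σ
  rw [compound_apply, Matrix.submatrix_mul _ _ _ id _ Function.bijective_id,
    Matrix.det_mul_eq_sum_minors]
  rfl

variable {b : Matrix (Fin n) (Fin n) F}

lemma compound_eq_zero_of_lexLt (hb : b.IsUpperTriangular) {σ τ : KSet n k}
    (h : lexLt σ.1 τ.1) : compound b k τ σ = 0 := by
  obtain ⟨m, hm⟩ := KSet.exists_index_of_lexLt h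
  exact Matrix.det_eq_zero_of_lowerLeft_eq_zero m fun p q hq hp => hb (hm q hq p hp)

lemma compound_self_ne_zero (hb : b.IsUpperTriangular) (hdet : IsUnit b.det) (σ : KSet n k) :
    compound b k σ σ ≠ 0 := by
  have hdiag : ∏ i, b i i ≠ 0 := Matrix.det_of_isUpperTriangular hb ▸ hdet.ne_zero
  have hsub : (b.submatrix σ.emb σ.emb).IsUpperTriangular := fun i j hij =>
    hb (σ.emb.strictMono hij)
  rw [compound_apply, Matrix.det_of_isUpperTriangular hsub]
  exact prod_ne_zero_iff.2 fun i _ => prod_ne_zero_iff.1 hdiag (σ.emb i) (mem_univ _)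

end Compound

section TriangularChangeOfFamily
variable {K V ι : Type*} [Field K] [AddCommGroup V] [Module K V] {r : ι → ι → Prop}
  [IsTrans ι r] {v w : ι → V} {c : ι → K}

open Submodule

lemma span_image_le_of_sub_smul_mem
    (hw : ∀ σ, w σ - c σ • v σ ∈ span K (v '' {τ | r τ σ})) (σ : ι) :
    span K (w '' {τ | r τ σ}) ≤ span K (v '' {τ | r τ σ}) := by
  rw [span_le]
  rintro _ ⟨τ, hτ, rfl⟩
  have hsub : span K (v '' {ρ | r ρ τ}) ≤ span K (v '' {ρ | r ρ σ}) :=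
    span_mono (Set.image_mono fun ρ hρ => _root_.trans hρ hτ)
  rw [← sub_add_cancel (w τ) (c τ • v τ)]
  exact add_mem (hsub (hw τ)) (smul_mem _ _ (subset_span ⟨τ, hτ, rfl⟩))

lemma notMem_span_image_of_sub_smul_mem
    (hw : ∀ σ, w σ - c σ • v σ ∈ span K (v '' {τ | r τ σ})) {σ : ι} (hc : c σ ≠ 0)
    (hv : v σ ∉ span K (v '' {τ | r τ σ})) : w σ ∉ span K (w '' {τ | r τ σ}) := by
  refine fun hwσ => hv ?_
  have hcv : c σ • v σ ∈ span K (v '' {τ | r τ σ}) := by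
    rw [← sub_sub_cancel (w σ) (c σ • v σ)]
    exact sub_mem (span_image_le_of_sub_smul_mem hw σ hwσ) (hw σ)
  simpa [hc] using smul_mem _ (c σ)⁻¹ hcv

end TriangularChangeOfFamily

section Delta
variable {F : Type*} [Field F] {n k : ℕ} {g b : Matrix (Fin n) (Fin n) F}

open Submodule

lemma shiftCol_mul (S : Finset (KSet n k)) (σ : KSet n k) :
    shiftCol (g * b) S σ = ∑ τ, compound b k τ σ • shiftCol g S τ := by
  ext ρ
  simp [shiftCol, compound_mul, Matrix.mul_apply, mul_comm]

lemma shiftCol_mul_sub_smul_mem_span (hb : b.IsUpperTriangular) (S : Finset (KSet n k))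
    (σ : KSet n k) :
    shiftCol (g * b) S σ - compound b k σ σ • shiftCol g S σ ∈
      span F (shiftCol g S '' {τ | lexLt τ.1 σ.1}) := by
  rw [shiftCol_mul, ← sum_erase_eq_sub (mem_univ σ)]
  refine sum_mem fun τ hτ => ?_
  rcases lexLt_or_lexLt_of_ne fun h => ne_of_mem_erase hτ (Subtype.ext h) with hlt | hgt
  · exact smul_mem _ _ (subset_span ⟨τ, hlt, rfl⟩)
  · rw [compound_eq_zero_of_lexLt hb hgt, zero_smul]
    exact zero_mem _

instance : IsTrans (KSet n k) fun τ σ => lexLt τ.1 σ.1 := ⟨fun _ _ _ => lexLt_trans⟩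

lemma Delta_subset_Delta_mul (hb : b.IsUpperTriangular) (hdet : IsUnit b.det)
    (S : Finset (KSet n k)) : Delta g S ⊆ Delta (g * b) S := fun σ hσ =>
  notMem_span_image_of_sub_smul_mem (shiftCol_mul_sub_smul_mem_span hb S)
    (compound_self_ne_zero hb hdet σ) hσ

end Delta

theorem Delta_mul_upperTriangular_general {F : Type*} [Field F] {n k : ℕ}
    (g b : Matrix (Fin n) (Fin n) F) (hb : IsUnit b.det)
    (htri : ∀ i j : Fin n, j < i → b i j = 0) (S : Finset (KSet n k)) :
    Delta (g * b) S = Delta g S := by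
  have hbtri : b.IsUpperTriangular := fun i j h => htri i j h
  have : Invertible b := b.invertibleOfIsUnitDet hb
  have hbinvtri : b⁻¹.IsUpperTriangular := Matrix.blockTriangular_inv_of_blockTriangular hbtri
  refine subset_antisymm ?_ (Delta_subset_Delta_mul hbtri hb S)
  calc Delta (g * b) S
      ⊆ Delta (g * b * b⁻¹) S :=
        Delta_subset_Delta_mul hbinvtri (b.isUnit_nonsing_inv_det hb) S
    _ = Delta g S := by rw [Matrix.mul_nonsing_inv_cancel_right _ _ hb]

/-- Multiplying `g` on the right by an invertible upper triangular matrix does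
not change the partial shift: `Δ_{gb}(S) = Δ_g(S)`. -/
theorem Delta_mul_upperTriangular {F : Type*} [Field F] {n k : ℕ}
    (g b : Matrix (Fin n) (Fin n) F) (hg : IsUnit g.det) (hb : IsUnit b.det)
    (htri : ∀ i j : Fin n, j < i → b i j = 0) (S : Finset (KSet n k)) :
    Delta (g * b) S = Delta g S :=
  Delta_mul_upperTriangular_general g b hb htri S
end

section
/- If g is an invertible n×n matrix over a field and t is an invertible diagonal matrix, then Δ_{tg}(S) = Δ_{gt}(S) = Δ_g(S) for every k-uniform hypergraph S. -/
open Finset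
open scoped symmDiff

/-- Multiplying `g` by an invertible diagonal matrix on either side does not
change the partial shift: `Δ_{tg}(S) = Δ_{gt}(S) = Δ_g(S)`. -/
theorem Delta_mul_diagonal {F : Type*} [Field F] {n k : ℕ}
    (g t : Matrix (Fin n) (Fin n) F) (hg : IsUnit g.det) (ht : IsUnit t.det)
    (hdiag : ∀ i j : Fin n, i ≠ j → t i j = 0) (S : Finset (KSet n k)) :
    Delta (t * g) S = Delta g S ∧ Delta (g * t) S = Delta g S := by
  classical
  -- diagonal entries are nonzero
  have htd : t = Matrix.diagonal (fun i => t i i) := by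
    ext a b
    by_cases h : a = b
    · subst h; simp [Matrix.diagonal]
    · simp [Matrix.diagonal, h, hdiag a b h]
  have hd : ∀ i, t i i ≠ 0 := by
    intro i hi
    have : t.det = 0 := by
      rw [htd, Matrix.det_diagonal]
      exact Finset.prod_eq_zero (Finset.mem_univ i) hi
    rw [this] at ht
    simpa using ht
  set c : KSet n k → F :=
    fun σ => ∏ a : Fin k, t (σ.1.orderIsoOfFin σ.2 a) (σ.1.orderIsoOfFin σ.2 a) with hc
  have hcne : ∀ σ, c σ ≠ 0 := fun σ =>
    Finset.prod_ne_zero_iff.mpr (fun a _ => hd _)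
  -- entrywise computations
  have hmul_left : ∀ (i j : Fin n), (t * g) i j = t i i * g i j := by
    intro i j
    rw [Matrix.mul_apply]
    rw [Finset.sum_eq_single i]
    · intro b _ hb; rw [hdiag i b (Ne.symm hb), zero_mul]
    · intro h; exact absurd (Finset.mem_univ i) h
  have hmul_right : ∀ (i j : Fin n), (g * t) i j = t j j * g i j := by
    intro i j
    rw [Matrix.mul_apply]
    rw [Finset.sum_eq_single j]
    · rw [mul_comm]
    · intro b _ hb; rw [hdiag b j hb, mul_zero]
    · intro h; exact absurd (Finset.mem_univ j) h
  have hleft : ∀ σ τ : KSet n k, compound (t * g) k σ τ = c σ * compound g k σ τ := by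
    intro σ τ
    unfold compound
    have : (Matrix.of fun a b : Fin k =>
        (t * g) (σ.1.orderIsoOfFin σ.2 a) (τ.1.orderIsoOfFin τ.2 b)) =
        Matrix.of fun a b : Fin k =>
          (fun a : Fin k => t (σ.1.orderIsoOfFin σ.2 a) (σ.1.orderIsoOfFin σ.2 a)) a *
          (Matrix.of fun a b : Fin k =>
            g (σ.1.orderIsoOfFin σ.2 a) (τ.1.orderIsoOfFin τ.2 b)) a b := by
      ext a b
      simp [hmul_left]
    rw [this, Matrix.det_mul_column]
  have hright : ∀ σ τ : KSet n k, compound (g * t) k σ τ = c τ * compound g k σ τ := by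
    intro σ τ
    unfold compound
    have : (Matrix.of fun a b : Fin k =>
        (g * t) (σ.1.orderIsoOfFin σ.2 a) (τ.1.orderIsoOfFin τ.2 b)) =
        Matrix.of fun a b : Fin k =>
          (fun b : Fin k => t (τ.1.orderIsoOfFin τ.2 b) (τ.1.orderIsoOfFin τ.2 b)) b *
          (Matrix.of fun a b : Fin k =>
            g (σ.1.orderIsoOfFin σ.2 a) (τ.1.orderIsoOfFin τ.2 b)) a b := by
      ext a b
      simp [hmul_right]
    rw [this, Matrix.det_mul_row]
  constructor
  · -- left multiplication: rows get rescaled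
    let L : ({ρ // ρ ∈ S} → F) ≃ₗ[F] ({ρ // ρ ∈ S} → F) :=
      LinearEquiv.piCongrRight fun ρ =>
        LinearEquiv.smulOfNeZero F F (c ρ.1) (hcne ρ.1)
    have hcol : shiftCol (t * g) S = fun σ => L (shiftCol g S σ) := by
      funext σ ρ
      simp only [shiftCol, L, LinearEquiv.piCongrRight_apply, LinearEquiv.smulOfNeZero_apply,
        smul_eq_mul]
      exact hleft ρ.1 σ
    ext σ
    simp only [Delta, Set.mem_setOf_eq, hcol]
    have himg : (fun σ => L (shiftCol g S σ)) '' {ρ : KSet n k | lexLt ρ.1 σ.1} =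
        L '' (shiftCol g S '' {ρ : KSet n k | lexLt ρ.1 σ.1}) := by
      rw [← Set.image_comp]; rfl
    rw [himg, ← LinearEquiv.coe_coe L, Submodule.span_image, not_iff_not,
      Submodule.mem_map_equiv]
    simp
  · -- right multiplication: columns get rescaled
    have hcol : ∀ σ, shiftCol (g * t) S σ = c σ • shiftCol g S σ := by
      intro σ
      funext ρ
      simp only [shiftCol, Pi.smul_apply, smul_eq_mul]
      exact hright ρ.1 σ
    ext σ
    simp only [Delta, Set.mem_setOf_eq]
    have hspan : Submodule.span F (shiftCol (g * t) S '' {ρ : KSet n k | lexLt ρ.1 σ.1}) =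
        Submodule.span F (shiftCol g S '' {ρ : KSet n k | lexLt ρ.1 σ.1}) := by
      apply le_antisymm <;> rw [Submodule.span_le] <;> rintro _ ⟨ρ, hρ, rfl⟩
      · rw [hcol ρ]
        exact Submodule.smul_mem _ _ (Submodule.subset_span (Set.mem_image_of_mem _ hρ))
      · have : shiftCol g S ρ = (c ρ)⁻¹ • shiftCol (g * t) S ρ := by
          rw [hcol ρ, smul_smul, inv_mul_cancel₀ (hcne ρ), one_smul]
        rw [this]
        exact Submodule.smul_mem _ _ (Submodule.subset_span (Set.mem_image_of_mem _ hρ))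
    rw [hspan, hcol σ, not_iff_not]
    exact Submodule.smul_mem_iff _ (hcne σ)
end

section
/- Let B ⊆ GL(n, F_q) be the subgroup of invertible upper triangular matrices and for w ∈ S_n let U(w) be the set of upper unitriangular matrices u with u_{ij} = 0 for all (i,j) ∉ inv(w). Then the sum over all w ∈ S_n of |U(w)|·|B| equals |GL(n, F_q)|. -/
open Equiv

/-- Inversions of `w` (right action `i · w = w i`). -/
def invSet {n : ℕ} (w : Perm (Fin n)) : Finset (Fin n × Fin n) :=
  Finset.univ.filter fun p => p.1 < p.2 ∧ w p.2 < w p.1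

/-- `U(w)`: upper unitriangular matrices vanishing at all superdiagonal
positions outside `inv(w)`. -/
def Uw {F : Type*} [Field F] {n : ℕ} (w : Perm (Fin n)) :
    Set (Matrix (Fin n) (Fin n) F) :=
  {u | (∀ i, u i i = 1) ∧ (∀ i j : Fin n, j < i → u i j = 0) ∧
    ∀ i j : Fin n, i < j → (i, j) ∉ invSet w → u i j = 0}

/-- The BorelSubgroup subgroup `B`: invertible upper triangular matrices. -/
def BorelSubgroup (F : Type*) [Field F] (n : ℕ) : Set (Matrix (Fin n) (Fin n) F) :=
  {b | IsUnit b.det ∧ ∀ i j : Fin n, j < i → b i j = 0}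

namespace BruhatAux

lemma mem_invSet {n : ℕ} {w : Perm (Fin n)} {i j : Fin n} :
    (i, j) ∈ invSet w ↔ i < j ∧ w j < w i := by
  simp [invSet]

/-- Insert `n` (the largest value) at position `k` in the word of `e`. -/
def ins {n : ℕ} (e : Perm (Fin n)) (k : Fin (n + 1)) : Perm (Fin (n + 1)) :=
  ((finSuccEquiv' k).trans e.optionCongr).trans (finSuccEquiv' (Fin.last n)).symm

lemma ins_self {n : ℕ} (e : Perm (Fin n)) (k : Fin (n + 1)) : ins e k k = Fin.last n := by
  simp [ins, finSuccEquiv'_at]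

lemma ins_succAbove {n : ℕ} (e : Perm (Fin n)) (k : Fin (n + 1)) (m : Fin n) :
    ins e k (k.succAbove m) = (e m).castSucc := by
  simp [ins, finSuccEquiv'_succAbove, finSuccEquiv'_symm_some, Fin.succAbove_last]

lemma ins_injective {n : ℕ} :
    Function.Injective (fun p : Perm (Fin n) × Fin (n + 1) => ins p.1 p.2) := by
  rintro ⟨e, k⟩ ⟨e', k'⟩ h
  simp only at h
  have hk : k = k' := by
    by_contra hkk
    obtain ⟨m, hm⟩ := Fin.exists_succAbove_eq (Ne.symm hkk)
    have h2 : ins e k k' = ins e' k' k' := by rw [h]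
    rw [ins_self, ← hm, ins_succAbove] at h2
    exact absurd h2 (Fin.castSucc_lt_last _).ne
  subst hk
  have he : e = e' := by
    apply Equiv.ext
    intro m
    have : (e m).castSucc = (e' m).castSucc := by
      rw [← ins_succAbove e k m, h, ins_succAbove]
    exact Fin.castSucc_injective _ this
  rw [he]

lemma card_invSet_ins {n : ℕ} (e : Perm (Fin n)) (k : Fin (n + 1)) :
    (invSet (ins e k)).card = (invSet e).card + (n - k) := by
  classical
  have hset : invSet (ins e k) =
      ((invSet e).image fun p => (k.succAbove p.1, k.succAbove p.2)) ∪
        ((Finset.Ioi k).image fun j => (k, j)) := by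
    ext ⟨i, j⟩
    simp only [mem_invSet, Finset.mem_union, Finset.mem_image, Finset.mem_Ioi, Prod.mk.injEq,
      Prod.exists]
    constructor
    · rintro ⟨hij, hw⟩
      rcases eq_or_ne j k with rfl | hj
      · rw [ins_self] at hw
        exact absurd hw (Fin.le_last _).not_gt
      rcases eq_or_ne i k with rfl | hi
      · exact Or.inr ⟨j, hij, rfl, rfl⟩
      · obtain ⟨a, ha⟩ := Fin.exists_succAbove_eq hi
        obtain ⟨b, hb⟩ := Fin.exists_succAbove_eq hj
        rw [← ha, ← hb, ins_succAbove, ins_succAbove] at hw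
        rw [← ha, ← hb] at hij
        exact Or.inl ⟨a, b,
          ⟨(Fin.succAbove_lt_succAbove_iff).mp hij, (Fin.castSucc_lt_castSucc_iff).mp hw⟩, ha, hb⟩
    · rintro (⟨a, b, hab, rfl, rfl⟩ | ⟨j, hkj, rfl, rfl⟩)
      · obtain ⟨h1, h2⟩ := hab
        refine ⟨(Fin.succAbove_lt_succAbove_iff).mpr h1, ?_⟩
        rw [ins_succAbove, ins_succAbove]
        exact (Fin.castSucc_lt_castSucc_iff).mpr h2
      · refine ⟨hkj, ?_⟩
        obtain ⟨m, hm⟩ := Fin.exists_succAbove_eq (ne_of_gt hkj)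
        rw [ins_self, ← hm, ins_succAbove]
        exact Fin.castSucc_lt_last _
  have hdisj : Disjoint ((invSet e).image fun p => (k.succAbove p.1, k.succAbove p.2))
      ((Finset.Ioi k).image fun j => (k, j)) := by
    rw [Finset.disjoint_left]
    rintro ⟨i, j⟩ h1 h2
    simp only [Finset.mem_image, Prod.mk.injEq, Prod.exists] at h1 h2
    obtain ⟨a, b, _, ha, _⟩ := h1
    obtain ⟨c, _, hc, _⟩ := h2
    exact Fin.succAbove_ne k a (ha.trans hc.symm)
  have hinj1 : Function.Injective fun p : Fin n × Fin n =>
      (k.succAbove p.1, k.succAbove p.2) := by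
    rintro ⟨a, b⟩ ⟨c, d⟩ h
    simp only [Prod.mk.injEq] at h
    exact Prod.ext (Fin.succAbove_right_injective h.1) (Fin.succAbove_right_injective h.2)
  have hinj2 : Function.Injective fun j : Fin (n + 1) => ((k, j) : Fin (n+1) × Fin (n+1)) := by
    intro a b h
    simpa using h
  rw [hset, Finset.card_union_of_disjoint hdisj, Finset.card_image_of_injective _ hinj1,
    Finset.card_image_of_injective _ hinj2, Fin.card_Ioi]
  omega

lemma sum_q_pow_inv (q : ℕ) : ∀ n : ℕ,
    (∑ w : Perm (Fin n), q ^ (invSet w).card)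
      = ∏ i : Fin n, ∑ j ∈ Finset.range ((i : ℕ) + 1), q ^ j := by
  intro n
  induction n with
  | zero =>
    have h0 : ∀ w : Perm (Fin 0), (invSet w).card = 0 := by
      intro w
      refine Finset.card_eq_zero.mpr ?_
      ext ⟨i, j⟩
      exact absurd i.2 (Nat.not_lt_zero _)
    simp [h0, Finset.card_univ]
  | succ n ih =>
    have hbij : Function.Bijective (fun p : Perm (Fin n) × Fin (n + 1) => ins p.1 p.2) := by
      rw [Fintype.bijective_iff_injective_and_card]
      refine ⟨ins_injective, ?_⟩
      simp [Fintype.card_perm, Nat.factorial_succ, mul_comm]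
    have hsum := Fintype.sum_bijective _ hbij
      (fun p : Perm (Fin n) × Fin (n + 1) => q ^ ((invSet p.1).card + (n - (p.2 : ℕ))))
      (fun w => q ^ (invSet w).card)
      (fun p => by simp only [card_invSet_ins])
    rw [← hsum, Fintype.sum_prod_type]
    simp_rw [pow_add, ← Finset.mul_sum]
    rw [← Finset.sum_mul]
    have hk : (∑ k : Fin (n + 1), q ^ (n - (k : ℕ))) = ∑ j ∈ Finset.range (n + 1), q ^ j := by
      rw [Fin.sum_univ_eq_sum_range (fun k => q ^ (n - k)) (n + 1),
        ← Finset.sum_range_reflect (fun j => q ^ j) (n + 1)]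
      rfl
    rw [ih, hk, Fin.prod_univ_castSucc]
    simp

lemma card_Uw {F : Type*} [Field F] [Fintype F] {n : ℕ} (w : Perm (Fin n)) :
    Nat.card (Uw (F := F) w) = Fintype.card F ^ (invSet w).card := by
  classical
  have e : Uw (F := F) w ≃ (↥(invSet w) → F) :=
    { toFun := fun u p => (u : Matrix (Fin n) (Fin n) F) p.1.1 p.1.2
      invFun := fun f =>
        ⟨fun i j => if h : (i, j) ∈ invSet w then f ⟨(i, j), h⟩
          else if i = j then 1 else 0, by
          refine ⟨fun i => ?_, fun i j hji => ?_, fun i j hij hns => ?_⟩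
          · show (if h : (i, i) ∈ invSet w then f ⟨(i, i), h⟩ else if i = i then 1 else 0) = 1
            rw [dif_neg (fun h => lt_irrefl i (mem_invSet.mp h).1), if_pos rfl]
          · show (if h : (i, j) ∈ invSet w then f ⟨(i, j), h⟩ else if i = j then 1 else 0) = 0
            rw [dif_neg (fun h => asymm hji (mem_invSet.mp h).1), if_neg (ne_of_gt hji)]
          · show (if h : (i, j) ∈ invSet w then f ⟨(i, j), h⟩ else if i = j then 1 else 0) = 0
            rw [dif_neg hns, if_neg (ne_of_lt hij)]⟩
      left_inv := by
        rintro ⟨u, h1, h2, h3⟩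
        apply Subtype.ext
        funext i j
        show (if h : (i, j) ∈ invSet w then u i j else if i = j then 1 else 0) = u i j
        split_ifs with ha hb
        · rfl
        · subst hb; exact (h1 i).symm
        · rcases lt_trichotomy i j with hc | hc | hc
          · exact (h3 i j hc ha).symm
          · exact absurd hc hb
          · exact (h2 i j hc).symm
      right_inv := by
        intro f
        funext p
        obtain ⟨⟨i, j⟩, hp⟩ := p
        simp only [dif_pos hp] }
  rw [Nat.card_congr e, Nat.card_eq_fintype_card, Fintype.card_fun, Fintype.card_coe]

lemma card_lt_pairs (n : ℕ) :
    Fintype.card {p : Fin n × Fin n // p.1 < p.2} = ∑ i : Fin n, (i : ℕ) := by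
  have e : {p : Fin n × Fin n // p.1 < p.2} ≃ Σ j : Fin n, Fin (j : ℕ) :=
    { toFun := fun p => ⟨p.1.2, ⟨p.1.1.1, p.2⟩⟩
      invFun := fun x => ⟨(⟨x.2.1, lt_trans x.2.2 x.1.2⟩, x.1), x.2.2⟩
      left_inv := by rintro ⟨⟨a, b⟩, h⟩; rfl
      right_inv := by rintro ⟨j, m⟩; rfl }
  rw [Fintype.card_congr e, Fintype.card_sigma]
  simp

lemma card_Borel (F : Type*) [Field F] [Fintype F] (n : ℕ) :
    Nat.card (BorelSubgroup F n) =
      (Fintype.card F - 1) ^ n * Fintype.card F ^ (∑ i : Fin n, (i : ℕ)) := by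
  classical
  have diag_ne : ∀ b : Matrix (Fin n) (Fin n) F, b ∈ BorelSubgroup F n →
      ∀ i, b i i ≠ 0 := by
    rintro b ⟨hdet, htri⟩ i
    have hd : b.det = ∏ i, b i i := Matrix.det_of_upperTriangular htri
    have hne : (∏ i, b i i) ≠ 0 := by
      rw [← hd]; exact fun h0 => by simp [h0] at hdet
    exact fun h => hne (Finset.prod_eq_zero (Finset.mem_univ i) h)
  have e : BorelSubgroup F n ≃
      (Fin n → {x : F // x ≠ 0}) × ({p : Fin n × Fin n // p.1 < p.2} → F) :=
    { toFun := fun b => (fun i => ⟨(b : Matrix (Fin n) (Fin n) F) i i, diag_ne b.1 b.2 i⟩,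
        fun p => (b : Matrix (Fin n) (Fin n) F) p.1.1 p.1.2)
      invFun := fun x =>
        ⟨fun i j => if h : (i, j).1 < (i, j).2 then x.2 ⟨(i, j), h⟩
          else if i = j then (x.1 i : F) else 0, by
          have htri : ∀ i j : Fin n, j < i →
              (fun i j => if h : (i, j).1 < (i, j).2 then x.2 ⟨(i, j), h⟩
                else if i = j then (x.1 i : F) else 0) i j = 0 := by
            intro i j hji
            simp only
            rw [dif_neg (asymm hji), if_neg (ne_of_gt hji)]
          refine ⟨?_, htri⟩
          rw [Matrix.det_of_upperTriangular htri]
          refine IsUnit.mk0 _ (Finset.prod_ne_zero_iff.mpr fun i _ => ?_)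
          show (if h : i < i then (x.2 ⟨(i, i), h⟩ : F) else if i = i then (x.1 i : F) else 0) ≠ 0
          rw [dif_neg (lt_irrefl i), if_pos rfl]
          exact (x.1 i).2⟩
      left_inv := by
        rintro ⟨b, hdet, htri⟩
        apply Subtype.ext
        funext i j
        show (if h : i < j then b i j else if i = j then b i i else 0) = b i j
        split_ifs with ha hb
        · rfl
        · subst hb; rfl
        · rcases lt_trichotomy i j with hc | hc | hc
          · exact absurd hc ha
          · exact absurd hc hb
          · exact (htri i j hc).symm
      right_inv := by
        rintro ⟨d, f⟩
        refine Prod.ext (funext fun i => ?_) (funext fun p => ?_)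
        · apply Subtype.ext
          show (if h : i < i then (f ⟨(i, i), h⟩ : F) else if i = i then (d i : F) else 0)
              = (d i : F)
          rw [dif_neg (lt_irrefl i), if_pos rfl]
        · obtain ⟨⟨i, j⟩, hp⟩ := p
          show (if h : i < j then (f ⟨(i, j), h⟩ : F) else _) = f ⟨(i, j), hp⟩
          rw [dif_pos hp] }
  have hne : Fintype.card {x : F // x ≠ 0} = Fintype.card F - 1 := by
    simp [Fintype.card_subtype_compl (· = (0 : F))]
  rw [Nat.card_congr e, Nat.card_eq_fintype_card, Fintype.card_prod, Fintype.card_fun,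
    Fintype.card_fun, card_lt_pairs, Fintype.card_fin, hne]

lemma geom_aux (q : ℕ) (hq : 1 ≤ q) (m : ℕ) :
    (q - 1) * (∑ j ∈ Finset.range m, q ^ j) + 1 = q ^ m := by
  obtain ⟨r, rfl⟩ : ∃ r, q = r + 1 := ⟨q - 1, by omega⟩
  simp only [Nat.add_sub_cancel]
  induction m with
  | zero => simp
  | succ m ih =>
    rw [Finset.sum_range_succ, mul_add, add_right_comm, ih, pow_succ]
    ring

lemma factor_eq (q n : ℕ) (hq : 1 ≤ q) (i : ℕ) (hi : i < n) :
    q ^ n - q ^ i = q ^ i * ((q - 1) * ∑ j ∈ Finset.range (n - i), q ^ j) := by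
  have hgeom := geom_aux q hq (n - i)
  have hpow : q ^ i * q ^ (n - i) = q ^ n := by
    rw [← pow_add, Nat.add_sub_cancel' (le_of_lt hi)]
  have h1 : q ^ i * q ^ (n - i) =
      q ^ i * ((q - 1) * ∑ j ∈ Finset.range (n - i), q ^ j) + q ^ i := by
    rw [← hgeom, mul_add, mul_one]
  omega

end BruhatAux

open BruhatAux in
/-- `∑_{w ∈ S_n} |U(w)| · |B| = |GL(n, F_q)|` over a finite field. -/
theorem sum_card_Uw_mul_card_BorelSubgroup {F : Type*} [Field F] [Fintype F] (n : ℕ) :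
    ∑ w : Perm (Fin n), Nat.card (Uw (F := F) w) * Nat.card (BorelSubgroup F n) =
      Nat.card (Matrix.GeneralLinearGroup (Fin n) F) := by
  classical
  have hq : 1 ≤ Fintype.card F := Fintype.card_pos
  set q := Fintype.card F with hqdef
  simp_rw [card_Uw, card_Borel, ← Finset.sum_mul]
  rw [sum_q_pow_inv, Matrix.card_GL_field]
  have hRHS : (∏ i : Fin n, (q ^ n - q ^ (i : ℕ)))
      = q ^ (∑ i : Fin n, (i : ℕ)) * ((q - 1) ^ n *
        ∏ i : Fin n, ∑ j ∈ Finset.range ((i : ℕ) + 1), q ^ j) := by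
    have h1 : (∏ i : Fin n, (q ^ n - q ^ (i : ℕ)))
        = ∏ i : Fin n, q ^ (i : ℕ) * ((q - 1) * ∑ j ∈ Finset.range (n - i), q ^ j) :=
      Finset.prod_congr rfl fun i _ => factor_eq q n hq i i.2
    have h2 : (∏ i : Fin n, ∑ j ∈ Finset.range (n - (i : ℕ)), q ^ j)
        = ∏ i : Fin n, ∑ j ∈ Finset.range ((i : ℕ) + 1), q ^ j := by
      rw [Fin.prod_univ_eq_prod_range (fun i => ∑ j ∈ Finset.range (n - i), q ^ j) n,
        Fin.prod_univ_eq_prod_range (fun i => ∑ j ∈ Finset.range (i + 1), q ^ j) n,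
        ← Finset.prod_range_reflect (fun i => ∑ j ∈ Finset.range (i + 1), q ^ j) n]
      refine Finset.prod_congr rfl fun i hi => ?_
      simp only [Finset.mem_range] at hi
      congr 2
      omega
    rw [h1, Finset.prod_mul_distrib, Finset.prod_mul_distrib, Finset.prod_const,
      Finset.prod_pow_eq_pow_sum, Finset.card_univ, Fintype.card_fin, h2]
  rw [hRHS]
  ring
end

section
/- For every upper unitriangular matrix u over a field, permutation w ∈ S_n, there exist matrices u' upper unitriangular with u'_{ij} = 0 for all (i,j) ∉ inv(w), and u'' upper unitriangular, such that u·w = u'·w·u'' (identifying w with its permutation matrix). Consequently UwB = U(w)wB, where U is the group of upper unitriangular matrices and B the upper triangular invertible matrices. -/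
/-!
Since `A * P_w = P_w * Aʷ` with `Aʷ i j = A (w⁻¹ i) (w⁻¹ j)`, it suffices to find a
unitriangular `v` such that `vʷ` is unitriangular too and `u * v ∈ U(w)`: then
`u * P_w = (u * v) * P_w * (v⁻¹)ʷ`. Such a `v` is built column by column: its column `m` is a
vector `x` with `x m = 1`, supported on `{m} ∪ S` for `S = {k < m | w k < w m}`, such that
`u *ᵥ x` vanishes on `S`. This triangular system is solved by adding the indices of `S` one at
a time, smallest first.
-/

open Equiv

/-- The permutation matrix `(δ_{i·w, j})_{ij}` of `w`. -/
def permMat {F : Type*} [Field F] {n : ℕ} (w : Perm (Fin n)) :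
    Matrix (Fin n) (Fin n) F :=
  fun i j => if w i = j then 1 else 0

/-- Upper unitriangular matrices. -/
def IsUnitriangular {F : Type*} [Field F] {n : ℕ}
    (u : Matrix (Fin n) (Fin n) F) : Prop :=
  (∀ i, u i i = 1) ∧ ∀ i j : Fin n, j < i → u i j = 0

/-- Membership in `U(w)`: unitriangular and vanishing at superdiagonal
positions outside `inv(w)`. -/
def MemUw {F : Type*} [Field F] {n : ℕ} (w : Perm (Fin n))
    (u : Matrix (Fin n) (Fin n) F) : Prop :=
  IsUnitriangular u ∧ ∀ i j : Fin n, i < j → (i, j) ∉ invSet w → u i j = 0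

/-- Invertible upper triangular matrices (the Borel subgroup `B`). -/
def MemBorel {F : Type*} [Field F] {n : ℕ}
    (b : Matrix (Fin n) (Fin n) F) : Prop :=
  IsUnit b.det ∧ ∀ i j : Fin n, j < i → b i j = 0

open Finset Matrix

section

variable {F : Type*} [Field F] {n : ℕ}

theorem IsUnitriangular.isUpperTriangular {u : Matrix (Fin n) (Fin n) F}
    (hu : IsUnitriangular u) : u.IsUpperTriangular :=
  fun i j h => hu.2 i j h

theorem MemBorel.isUpperTriangular {b : Matrix (Fin n) (Fin n) F} (hb : MemBorel b) :
    b.IsUpperTriangular :=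
  fun i j h => hb.2 i j h

theorem Matrix.IsUpperTriangular.mul_apply_self {A B : Matrix (Fin n) (Fin n) F}
    (hA : A.IsUpperTriangular) (hB : B.IsUpperTriangular) (i : Fin n) :
    (A * B) i i = A i i * B i i := by
  rw [mul_apply]
  refine sum_eq_single_of_mem i (mem_univ _) fun k _ hk => ?_
  rcases lt_or_gt_of_ne hk with h | h
  · rw [hA h, zero_mul]
  · rw [hB h, mul_zero]

theorem IsUnitriangular.mul {u v : Matrix (Fin n) (Fin n) F} (hu : IsUnitriangular u)
    (hv : IsUnitriangular v) : IsUnitriangular (u * v) := by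
  refine ⟨fun i => ?_, fun i j h => hu.isUpperTriangular.mul hv.isUpperTriangular h⟩
  rw [hu.isUpperTriangular.mul_apply_self hv.isUpperTriangular, hu.1, hv.1, one_mul]

theorem IsUnitriangular.det_eq_one {u : Matrix (Fin n) (Fin n) F} (hu : IsUnitriangular u) :
    u.det = 1 := by
  simp [det_of_isUpperTriangular hu.isUpperTriangular, hu.1]

theorem IsUnitriangular.inv {u : Matrix (Fin n) (Fin n) F} (hu : IsUnitriangular u) :
    IsUnitriangular u⁻¹ := by
  have hdet : IsUnit u.det := by simp [hu.det_eq_one]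
  have : Invertible u := invertibleOfIsUnitDet u hdet
  have hinv : u⁻¹.IsUpperTriangular := blockTriangular_inv_of_blockTriangular hu.isUpperTriangular
  refine ⟨fun i => ?_, fun i j h => hinv h⟩
  simpa [nonsing_inv_mul u hdet, hu.1] using
    (hinv.mul_apply_self hu.isUpperTriangular i).symm

theorem MemBorel.mul {a b : Matrix (Fin n) (Fin n) F} (ha : MemBorel a) (hb : MemBorel b) :
    MemBorel (a * b) :=
  ⟨by rw [det_mul]; exact ha.1.mul hb.1,
    fun _ _ h => ha.isUpperTriangular.mul hb.isUpperTriangular h⟩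

theorem IsUnitriangular.memBorel {u : Matrix (Fin n) (Fin n) F} (hu : IsUnitriangular u) :
    MemBorel u :=
  ⟨by simp [hu.det_eq_one], hu.2⟩

theorem permMat_eq_toMatrix (w : Perm (Fin n)) :
    (permMat w : Matrix (Fin n) (Fin n) F) = w.toPEquiv.toMatrix := by
  ext i j
  simp [permMat, PEquiv.toMatrix_apply]

theorem mul_permMat (A : Matrix (Fin n) (Fin n) F) (w : Perm (Fin n)) :
    A * permMat w = permMat w * A.submatrix w.symm w.symm := by
  rw [permMat_eq_toMatrix, PEquiv.mul_toMatrix_toPEquiv, PEquiv.toMatrix_toPEquiv_mul,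
    submatrix_submatrix, Equiv.symm_comp_self]
  rfl

theorem IsUnitriangular.exists_mulVec_eq_zero {u : Matrix (Fin n) (Fin n) F}
    (hu : IsUnitriangular u) {m : Fin n} (S : Finset (Fin n)) (hm : m ∉ S) :
    ∃ x : Fin n → F, x m = 1 ∧ (∀ k ∉ S, k ≠ m → x k = 0) ∧ ∀ r ∈ S, (u *ᵥ x) r = 0 := by
  induction S using Finset.induction_on_min with
  | empty => exact ⟨Pi.single m 1, by simp, fun k _ hk => Pi.single_eq_of_ne hk _, by simp⟩
  | insert a S haS ih =>
    obtain ⟨hma, hmS⟩ : m ≠ a ∧ m ∉ S := by simpa using hm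
    obtain ⟨x, hxm, hx0, hux⟩ := ih hmS
    -- `u` is upper triangular, so adding a multiple of `e_a` leaves the rows `r > a` alone.
    refine ⟨x - (u *ᵥ x) a • Pi.single a 1, ?_, fun k hk hkm => ?_, fun r hr => ?_⟩
    · simp [hxm, hma]
    · obtain ⟨hka, hkS⟩ : k ≠ a ∧ k ∉ S := by simpa using hk
      simp [hx0 k hkS hkm, hka]
    · rw [mulVec_sub, mulVec_smul, mulVec_single_one]
      rcases mem_insert.1 hr with rfl | hrS
      · simp [hu.1]
      · simp [hux r hrS, hu.2 r a (haS r hrS)]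

theorem exists_mul_memUw (w : Perm (Fin n)) {u : Matrix (Fin n) (Fin n) F}
    (hu : IsUnitriangular u) :
    ∃ v : Matrix (Fin n) (Fin n) F, IsUnitriangular v ∧
      IsUnitriangular (v.submatrix w.symm w.symm) ∧ MemUw w (u * v) := by
  choose x hxm hx0 hux using fun m : Fin n =>
    hu.exists_mulVec_eq_zero (m := m) (univ.filter fun k => k < m ∧ w k < w m) (by simp)
  have hv0 : ∀ k m, k ≠ m → ¬(k < m ∧ w k < w m) → (of x)ᵀ k m = 0 :=
    fun k m hkm hk => hx0 m k (by simpa using hk) hkm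
  have hv : IsUnitriangular (of x)ᵀ :=
    ⟨hxm, fun i j h => hv0 i j h.ne' fun h' => h.not_gt h'.1⟩
  have hvw : IsUnitriangular ((of x)ᵀ.submatrix w.symm w.symm) :=
    ⟨fun i => hxm _, fun i j h => hv0 _ _ (by simpa using h.ne')
      fun h' => h.not_gt (by simpa using h'.2)⟩
  refine ⟨(of x)ᵀ, hv, hvw, hu.mul hv, fun i j h hij => ?_⟩
  have hw : w i < w j := lt_of_le_of_ne (by simpa [invSet, h] using hij)
    (w.injective.ne h.ne)
  exact hux j i (by simp [h, hw])

end

/-- For every unitriangular `u` there are `u' ∈ U(w)` and unitriangular `u''`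
with `u·w = u'·w·u''`; consequently `UwB = U(w)wB`. -/
theorem unitriangular_decomposition {F : Type*} [Field F] {n : ℕ}
    (w : Perm (Fin n)) :
    (∀ u : Matrix (Fin n) (Fin n) F, IsUnitriangular u →
      ∃ u' u'' : Matrix (Fin n) (Fin n) F, MemUw w u' ∧ IsUnitriangular u'' ∧
        u * permMat w = u' * permMat w * u'') ∧
    {m : Matrix (Fin n) (Fin n) F |
        ∃ u b, IsUnitriangular u ∧ MemBorel b ∧ m = u * permMat w * b} =
      {m : Matrix (Fin n) (Fin n) F |
        ∃ u b, MemUw w u ∧ MemBorel b ∧ m = u * permMat w * b} := by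
  have factor : ∀ u : Matrix (Fin n) (Fin n) F, IsUnitriangular u →
      ∃ u' u'' : Matrix (Fin n) (Fin n) F, MemUw w u' ∧ IsUnitriangular u'' ∧
        u * permMat w = u' * permMat w * u'' := by
    intro u hu
    obtain ⟨v, hv, hvw, huv⟩ := exists_mul_memUw w hu
    refine ⟨u * v, v⁻¹.submatrix w.symm w.symm, huv, by simpa using hvw.inv, ?_⟩
    rw [Matrix.mul_assoc, ← mul_permMat, Matrix.mul_assoc,
      Matrix.mul_nonsing_inv_cancel_left _ _ (by simp [hv.det_eq_one])]
  refine ⟨factor, Set.ext fun m => ⟨?_, ?_⟩⟩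
  · rintro ⟨u, b, hu, hb, rfl⟩
    obtain ⟨u', u'', hu', hu'', heq⟩ := factor u hu
    exact ⟨u', u'' * b, hu', hu''.memBorel.mul hb, by rw [heq, Matrix.mul_assoc]⟩
  · rintro ⟨u, b, hu, hb, rfl⟩
    exact ⟨u, b, hu.1, hb, rfl⟩
end

section
/- If K is a near cone on n vertices and t ∈ S_n is any transposition, then the combinatorial shift Γ_t(K) is again a near cone. -/
open Finset

/-- Image `σ·w` of a vertex set under the transposition `(i j)`. -/
def swapSet {n : ℕ} (i j : Fin n) (σ : Finset (Fin n)) : Finset (Fin n) :=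
  σ.image (Equiv.swap i j)

/-- The combinatorial shift of a single hyperedge `σ ∈ S` with respect to the
transposition `(i j)` with `i < j`: replace `σ` by `σ·(i j)` if `i ∉ σ ∋ j`
and `σ·(i j) ∉ S`, else keep `σ`. -/
def gammaFace {n : ℕ} (i j : Fin n) (S : Finset (Finset (Fin n)))
    (σ : Finset (Fin n)) : Finset (Fin n) :=
  if i ∉ σ ∧ j ∈ σ ∧ swapSet i j σ ∉ S then swapSet i j σ else σ

/-- The combinatorial shift `Γ_{(i j)}(S)` of Erdős–Ko–Rado. -/
def gammaShift {n : ℕ} (i j : Fin n) (S : Finset (Finset (Fin n))) :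
    Finset (Finset (Fin n)) :=
  S.image (gammaFace i j S)

/-- `K` is a simplicial complex: closed under taking subsets. -/
def IsComplex {n : ℕ} (K : Finset (Finset (Fin (n + 1)))) : Prop :=
  ∀ σ ∈ K, ∀ τ ⊆ σ, τ ∈ K

/-- `K` is a near cone (first vertex `0` of `Fin (n+1)` playing the role of
the vertex `1`). -/
def IsNearCone {n : ℕ} (K : Finset (Finset (Fin (n + 1)))) : Prop :=
  ∀ σ ∈ K, (0 : Fin (n + 1)) ∉ σ → ∀ i ∈ σ, insert 0 (σ.erase i) ∈ K

lemma mem_swapSet {n : ℕ} {i j a : Fin n} {σ : Finset (Fin n)} :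
    a ∈ swapSet i j σ ↔ Equiv.swap i j a ∈ σ := by
  constructor
  · rintro h
    rcases Finset.mem_image.mp h with ⟨b, hb, rfl⟩
    simpa using hb
  · intro h
    exact Finset.mem_image.mpr ⟨_, h, by simp⟩

lemma swapSet_insert {n : ℕ} {i j a : Fin n} {σ : Finset (Fin n)} :
    swapSet i j (insert a σ) = insert (Equiv.swap i j a) (swapSet i j σ) :=
  Finset.image_insert _ _ _

lemma swapSet_erase {n : ℕ} {i j a : Fin n} {σ : Finset (Fin n)} :
    swapSet i j (σ.erase a) = (swapSet i j σ).erase (Equiv.swap i j a) :=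
  Finset.image_erase (Equiv.swap i j).injective _ _

lemma swapSet_eq_self {n : ℕ} {i j : Fin n} {σ : Finset (Fin n)}
    (h : i ∈ σ ↔ j ∈ σ) : swapSet i j σ = σ := by
  ext a
  rw [mem_swapSet]
  rcases eq_or_ne a i with rfl | hai
  · rw [Equiv.swap_apply_left]; exact ⟨h.mpr, fun ha => h.mp ha⟩
  rcases eq_or_ne a j with rfl | haj
  · rw [Equiv.swap_apply_right]; exact ⟨h.mp, fun ha => h.mpr ha⟩
  · rw [Equiv.swap_apply_of_ne_of_ne hai haj]

/-- The combinatorial shift of a near cone by any transposition is again a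
near cone.  (Since `Γ_t` preserves cardinalities of faces, checking
`σ·t ∉ K` is the same as checking it against the layer of equal dimension.) -/
theorem isNearCone_gammaShift {n : ℕ} (K : Finset (Finset (Fin (n + 1))))
    (hK : IsComplex K) (hnc : IsNearCone K) (i j : Fin (n + 1)) (hij : i < j) :
    IsNearCone (gammaShift i j K) := by
  have hj0 : j ≠ 0 := Fin.pos_iff_ne_zero.mp (lt_of_le_of_lt (Fin.zero_le i) hij)
  have hijne : i ≠ j := ne_of_lt hij
  intro σ hσ h0 r hr
  obtain ⟨τ, hτK, hτ⟩ := Finset.mem_image.mp hσ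
  unfold gammaFace at hτ
  by_cases hcond : i ∉ τ ∧ j ∈ τ ∧ swapSet i j τ ∉ K
  · -- shifted case: σ = τ·t
    rw [if_pos hcond] at hτ
    obtain ⟨hiτ, hjτ, hst⟩ := hcond
    subst hτ
    have hiσ : i ∈ swapSet i j τ := mem_swapSet.mpr (by rwa [Equiv.swap_apply_left])
    have hi0 : i ≠ 0 := fun h => h0 (h ▸ hiσ)
    have hjσ : j ∉ swapSet i j τ := fun h => hiτ (by simpa using mem_swapSet.mp h)
    have h0τ : (0 : Fin (n+1)) ∉ τ := fun h =>
      h0 (mem_swapSet.mpr (by rwa [Equiv.swap_apply_of_ne_of_ne (Ne.symm hi0) (Ne.symm hj0)]))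
    have hsw0 : Equiv.swap i j (0 : Fin (n+1)) = 0 :=
      Equiv.swap_apply_of_ne_of_ne (Ne.symm hi0) (Ne.symm hj0)
    rcases eq_or_ne r i with rfl | hri
    · -- r = i : target is insert 0 (τ.erase j), which is in K and fixed by γ
      have hkey : (swapSet r j τ).erase r = τ.erase j := by
        have h1 : (swapSet r j τ).erase r = swapSet r j (τ.erase j) := by
          rw [swapSet_erase, Equiv.swap_apply_right]
        rw [h1, swapSet_eq_self]
        simp [hiτ, Finset.mem_erase]
      rw [hkey]
      have hπK : insert 0 (τ.erase j) ∈ K := hnc τ hτK h0τ j hjτ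
      refine Finset.mem_image.mpr ⟨_, hπK, ?_⟩
      unfold gammaFace
      rw [if_neg]
      rintro ⟨-, hjmem, -⟩
      rcases Finset.mem_insert.mp hjmem with h | h
      · exact hj0 h
      · exact (Finset.mem_erase.mp h).1 rfl
    · -- r ≠ i, so r ∈ τ, r ≠ j
      have hrj : r ≠ j := fun h => hjσ (h ▸ hr)
      have hswr : Equiv.swap i j r = r := Equiv.swap_apply_of_ne_of_ne hri hrj
      have hrτ : r ∈ τ := by have := mem_swapSet.mp hr; rwa [hswr] at this
      have hr0 : r ≠ 0 := fun h => h0 (h ▸ hr)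
      have hρK : insert 0 (τ.erase r) ∈ K := hnc τ hτK h0τ r hrτ
      have himg : swapSet i j (insert 0 (τ.erase r)) = insert 0 ((swapSet i j τ).erase r) := by
        rw [swapSet_insert, hsw0, swapSet_erase, hswr]
      by_cases hπ : insert 0 ((swapSet i j τ).erase r) ∈ K
      · -- target is in K and fixed by γ since j ∉ target
        refine Finset.mem_image.mpr ⟨_, hπ, ?_⟩
        unfold gammaFace
        rw [if_neg]
        rintro ⟨-, hjmem, -⟩
        rcases Finset.mem_insert.mp hjmem with h | h
        · exact hj0 h
        · exact hjσ (Finset.mem_of_mem_erase h)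
      · -- γ shifts ρ onto the target
        refine Finset.mem_image.mpr ⟨_, hρK, ?_⟩
        unfold gammaFace
        rw [if_pos, himg]
        refine ⟨?_, ?_, ?_⟩
        · intro h
          rcases Finset.mem_insert.mp h with h | h
          · exact hi0 h
          · exact hiτ (Finset.mem_of_mem_erase h)
        · exact Finset.mem_insert.mpr (Or.inr (Finset.mem_erase.mpr ⟨Ne.symm hrj, hjτ⟩))
        · rwa [himg]
  · -- unshifted case: σ = τ
    rw [if_neg hcond] at hτ
    subst hτ
    have hρK : insert 0 (τ.erase r) ∈ K := hnc τ hτK h0 r hr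
    refine Finset.mem_image.mpr ⟨_, hρK, ?_⟩
    unfold gammaFace
    rw [if_neg]
    rintro ⟨hiρ, hjρ, hsρ⟩
    have hi0 : i ≠ 0 := fun h => hiρ (by rw [h]; exact Finset.mem_insert_self 0 _)
    have hsw0 : Equiv.swap i j (0 : Fin (n+1)) = 0 :=
      Equiv.swap_apply_of_ne_of_ne (Ne.symm hi0) (Ne.symm hj0)
    have hjr : j ≠ r := by
      rcases Finset.mem_insert.mp hjρ with h | h
      · exact absurd h hj0
      · exact (Finset.mem_erase.mp h).1
    have hjσ : j ∈ τ := by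
      rcases Finset.mem_insert.mp hjρ with h | h
      · exact absurd h hj0
      · exact Finset.mem_of_mem_erase h
    have hiρ' : i ∉ τ.erase r := fun h => hiρ (Finset.mem_insert_of_mem h)
    apply hsρ
    by_cases hiσ : i ∈ τ
    · -- then i = r and σ·t would be insert 0 (τ.erase j) ∈ K
      have hri : r = i := by
        by_contra h
        exact hiρ' (Finset.mem_erase.mpr ⟨Ne.symm h, hiσ⟩)
      subst hri
      have : swapSet r j (insert 0 (τ.erase r)) = insert 0 (τ.erase j) := by
        rw [swapSet_insert, hsw0]
        congr 1
        rw [swapSet_erase, Equiv.swap_apply_left,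
          swapSet_eq_self (⟨fun _ => hjσ, fun _ => hiσ⟩ : r ∈ τ ↔ j ∈ τ)]
      rw [this]
      exact hnc τ hτK h0 j hjσ
    · -- then σ·t ∈ K (since γ didn't shift σ) and near cone applies to it
      have hστK : swapSet i j τ ∈ K := by
        by_contra h
        exact hcond ⟨hiσ, hjσ, h⟩
      have hri : r ≠ i := fun h => hiσ (h ▸ hr)
      have hswr : Equiv.swap i j r = r := Equiv.swap_apply_of_ne_of_ne hri (Ne.symm hjr)
      have h0στ : (0 : Fin (n+1)) ∉ swapSet i j τ := fun h =>
        h0 (by have := mem_swapSet.mp h; rwa [hsw0] at this)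
      have hrστ : r ∈ swapSet i j τ := mem_swapSet.mpr (by rwa [hswr])
      have : swapSet i j (insert 0 (τ.erase r)) = insert 0 ((swapSet i j τ).erase r) := by
        rw [swapSet_insert, hsw0, swapSet_erase, hswr]
      rw [this]
      exact hnc _ hστK h0στ r hrστ
end

section
/- Let m be a matrix over a field E, let J be an initial segment of the column index set, and let w be a permutation of the columns with J·w = J. Let I_m denote the lexicographically minimal basis of the column matroid of m (as a subset of column indices), and similarly I_{mw} for the matrix with columns permuted by w. Then |I_m ∩ J| = |I_{mw} ∩ J|. -/
open Finset

/-- `I_m`: the lexicographically minimal basis of the column matroid of `m`,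
described greedily: the indices `j` whose column does not lie in the span of
the earlier columns. -/
def greedyBasis {F : Type*} [Field F] {ι : Type*} {N : ℕ}
    (m : Matrix ι (Fin N) F) : Set (Fin N) :=
  {j | (fun i => m i j) ∉
    Submodule.span F ((fun j' : Fin N => fun i => m i j') '' {j' | j' < j})}

open Submodule Module in
lemma finrank_span_insert_of_not_mem {F V : Type*} [Field F] [AddCommGroup V] [Module F V]
    (s : Set V) (hs : s.Finite) (v : V) (hv : v ∉ span F s) :
    finrank F (span F (insert v s)) = finrank F (span F s) + 1 := by
  have h1 : FiniteDimensional F (span F s) := FiniteDimensional.span_of_finite F hs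
  have h2 : FiniteDimensional F (F ∙ v) :=
    FiniteDimensional.span_of_finite F (Set.finite_singleton v)
  have hsup : span F (insert v s) = (F ∙ v) ⊔ span F s := by rw [Submodule.span_insert]
  have hinf : (F ∙ v) ⊓ span F s = ⊥ := by
    rw [Submodule.eq_bot_iff]
    rintro x ⟨hx1, hx2⟩
    rcases mem_span_singleton.mp hx1 with ⟨c, rfl⟩
    by_contra hne
    have hc : c ≠ 0 := by rintro rfl; simp at hne
    exact hv (by simpa [smul_smul, inv_mul_cancel₀ hc] using (span F s).smul_mem c⁻¹ hx2)
  have hv0 : v ≠ 0 := fun h => hv (h ▸ (span F s).zero_mem)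
  have := Submodule.finrank_sup_add_finrank_inf_eq (F ∙ v) (span F s)
  rw [hinf, finrank_bot, finrank_span_singleton hv0] at this
  rw [hsup]
  omega

/-- Key counting lemma: on the initial segment of indices `< k`, the number of
greedy basis elements equals the rank of the corresponding columns. -/
lemma greedyBasis_ncard_eq_finrank {F : Type*} [Field F] {ι : Type*} {N : ℕ}
    (m : Matrix ι (Fin N) F) (k : ℕ) :
    (greedyBasis m ∩ {j : Fin N | (j : ℕ) < k}).ncard =
      Module.finrank F
        (Submodule.span F ((fun j : Fin N => fun i => m i j) '' {j : Fin N | (j : ℕ) < k})) := by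
  induction k with
  | zero =>
      rw [show {j : Fin N | (j : ℕ) < 0} = (∅ : Set (Fin N)) by simp]
      rw [Set.image_empty, Submodule.span_empty, finrank_bot]
      simp
  | succ k ih =>
      by_cases hk : k < N
      · set jk : Fin N := ⟨k, hk⟩ with hjk
        have hset : {j : Fin N | (j : ℕ) < k + 1} = insert jk {j : Fin N | (j : ℕ) < k} := by
          ext j
          simp only [Set.mem_setOf_eq, Set.mem_insert_iff, Fin.ext_iff, hjk]
          omega
        have hbelow : {j' : Fin N | j' < jk} = {j : Fin N | (j : ℕ) < k} := by
          ext j; simp [Fin.lt_def, hjk]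
        have himg : (fun j : Fin N => fun i => m i j) '' {j : Fin N | (j : ℕ) < k + 1} =
            insert (fun i => m i jk)
              ((fun j : Fin N => fun i => m i j) '' {j : Fin N | (j : ℕ) < k}) := by
          rw [hset, Set.image_insert_eq]
        have hfin : ((fun j : Fin N => fun i => m i j) ''
            {j : Fin N | (j : ℕ) < k}).Finite :=
          (Set.toFinite _).image _
        have hmem : jk ∈ greedyBasis m ↔ (fun i => m i jk) ∉
            Submodule.span F ((fun j : Fin N => fun i => m i j) ''
              {j : Fin N | (j : ℕ) < k}) := by
          rw [greedyBasis, Set.mem_setOf_eq, hbelow]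
        by_cases h : jk ∈ greedyBasis m
        · have hinter : greedyBasis m ∩ {j : Fin N | (j : ℕ) < k + 1} =
              insert jk (greedyBasis m ∩ {j : Fin N | (j : ℕ) < k}) := by
            rw [hset]
            ext j
            simp only [Set.mem_inter_iff, Set.mem_insert_iff, Set.mem_setOf_eq]
            constructor
            · rintro ⟨h1, (rfl | h2)⟩
              · exact Or.inl rfl
              · exact Or.inr ⟨h1, h2⟩
            · rintro (rfl | ⟨h1, h2⟩)
              · exact ⟨h, Or.inl rfl⟩
              · exact ⟨h1, Or.inr h2⟩
          have hnot : jk ∉ greedyBasis m ∩ {j : Fin N | (j : ℕ) < k} := by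
            simp [hjk]
          rw [hinter, Set.ncard_insert_of_notMem hnot (Set.toFinite _), ih, himg,
            finrank_span_insert_of_not_mem _ hfin _ (hmem.mp h)]
        · have hinter : greedyBasis m ∩ {j : Fin N | (j : ℕ) < k + 1} =
              greedyBasis m ∩ {j : Fin N | (j : ℕ) < k} := by
            rw [hset]
            ext j
            simp only [Set.mem_inter_iff, Set.mem_insert_iff, Set.mem_setOf_eq]
            constructor
            · rintro ⟨h1, (rfl | h2)⟩
              · exact absurd h1 h
              · exact ⟨h1, h2⟩
            · exact fun hj => ⟨hj.1, Or.inr hj.2⟩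
          have hspan : (fun i => m i jk) ∈
              Submodule.span F ((fun j : Fin N => fun i => m i j) ''
                {j : Fin N | (j : ℕ) < k}) := not_not.mp (fun hc => h (hmem.mpr hc))
          rw [hinter, ih, himg, Submodule.span_insert_eq_span hspan]
      · have : {j : Fin N | (j : ℕ) < k + 1} = {j : Fin N | (j : ℕ) < k} := by
          ext j; have := j.isLt; simp only [Set.mem_setOf_eq]; omega
        rw [this, ih]

/-- If `J` is an initial segment of the column indices and `w` is a
permutation of the columns with `J·w = J`, then
`|I_m ∩ J| = |I_{mw} ∩ J|`, where `mw` is `m` with columns permuted by `w`. -/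
theorem greedyBasis_inter_initialSegment {F : Type*} [Field F] {ι : Type*}
    {N : ℕ} (m : Matrix ι (Fin N) F) (w : Equiv.Perm (Fin N)) (J : Set (Fin N))
    (hJ : ∀ j j' : Fin N, j' ≤ j → j ∈ J → j' ∈ J)
    (hw : ∀ j : Fin N, w j ∈ J ↔ j ∈ J) :
    (greedyBasis m ∩ J).ncard = (greedyBasis (m.submatrix id ⇑w) ∩ J).ncard := by
  -- `J` is an initial segment: `J = {j | (j : ℕ) < k}` for some `k`.
  obtain ⟨k, hk⟩ : ∃ k : ℕ, J = {j : Fin N | (j : ℕ) < k} := by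
    rcases Set.eq_empty_or_nonempty J with h | h
    · exact ⟨0, by simp [h]⟩
    · have hfin : J.Finite := Set.toFinite J
      obtain ⟨a, haJ, ha⟩ := Set.exists_max_image J id hfin h
      refine ⟨(a : ℕ) + 1, ?_⟩
      ext j
      simp only [Set.mem_setOf_eq]
      constructor
      · intro hj
        have := ha j hj
        simp only [id] at this
        omega
      · intro hj
        exact hJ a j (Fin.le_def.mpr (by omega)) haJ
  subst hk
  rw [greedyBasis_ncard_eq_finrank, greedyBasis_ncard_eq_finrank]
  -- columns of `m.submatrix id w` over `J` are columns of `m` over `w '' J = J`.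
  have hwJ : ⇑w '' {j : Fin N | (j : ℕ) < k} = {j : Fin N | (j : ℕ) < k} := by
    ext j
    constructor
    · rintro ⟨x, hx, rfl⟩
      exact (hw x).mpr hx
    · intro hj
      exact ⟨w⁻¹ j, (hw (w⁻¹ j)).mp (by simpa using hj), by simp⟩
  have himg2 : (fun j : Fin N => fun i => m.submatrix id ⇑w i j) ''
      {j : Fin N | (j : ℕ) < k} = (fun j : Fin N => fun i => m i j) ''
      {j : Fin N | (j : ℕ) < k} := by
    have hcomp : (fun j : Fin N => fun i => m.submatrix id ⇑w i j) =
        (fun j : Fin N => fun i => m i j) ∘ ⇑w := rfl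
    rw [hcomp, Set.image_comp, hwJ]
  rw [himg2]
end
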